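/- arXiv:2107.08324 — 2 statements merged into one kernel-verified Lean document; each statement's English description precedes it below -/
import Mathlib

section
/- Any coherent linear order on a finite poset (S, ≺) can be transformed into any other coherent linear order on (S, ≺) by a sequence of adjacent transpositions such that every intermediate linear order in the sequence is coherent with ≺. -/
/-!
Measure the distance from `r` to `r'` by the number of inversions, pairs ordered one way by `r`
and the other way by `r'`. If there is an inversion, one with the fewest elements strictly
between its ends is adjacent in `r`: an element in between would form a smaller inversion with
one of the ends. Reversing that adjacent pair keeps the order linear, keeps it coherent (a pair
related by `≺` is never an inversion), and removes exactly one inversion.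
-/

open Relation

theorem Relation.ReflTransGen.exists_seq {α : Type*} {r : α → α → Prop} {a b : α}
    (h : ReflTransGen r a b) :
    ∃ (k : ℕ) (f : ℕ → α), f 0 = a ∧ f k = b ∧ ∀ i < k, r (f i) (f (i + 1)) := by
  induction h using ReflTransGen.head_induction_on with
  | refl => exact ⟨0, fun _ => b, rfl, rfl, by simp⟩
  | head hac _ ih =>
    obtain ⟨k, f, rfl, hk, hf⟩ := ih
    refine ⟨k + 1, fun | 0 => _ | i + 1 => f i, rfl, hk, ?_⟩
    rintro (_ | i) hi
    · exact hac
    · exact hf i (by omega)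

section
variable {S : Type*} {r r' : S → S → Prop} {u v : S}

def swapPair (r : S → S → Prop) (u v : S) : S → S → Prop :=
  fun a b => (a = v ∧ b = u) ∨ (r a b ∧ ¬(a = u ∧ b = v))

def IsAdjacent (r : S → S → Prop) (u v : S) : Prop :=
  r u v ∧ ¬∃ w, r u w ∧ r w v

theorem isStrictTotalOrder_swapPair [IsStrictTotalOrder S r] (huv : IsAdjacent r u v) :
    IsStrictTotalOrder S (swapPair r u v) := by
  obtain ⟨huv, hadj⟩ := huv
  have irr : ∀ a, ¬r a a := irrefl
  have tr : ∀ a b c, r a b → r b c → r a c := fun _ _ _ => _root_.trans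
  have tri : ∀ a b, r a b ∨ a = b ∨ r b a := trichotomous
  refine { trichotomous := ?_, irrefl := ?_, trans := ?_ } <;> unfold swapPair <;> grind

def inversions (r r' : S → S → Prop) : Set (S × S) :=
  {p | r p.1 p.2 ∧ r' p.2 p.1}

theorem inversions_swapPair [IsStrictTotalOrder S r'] (hvu : r' v u) :
    inversions (swapPair r u v) r' = inversions r r' \ {(u, v)} := by
  ext ⟨a, b⟩
  simp only [inversions, swapPair, Set.mem_ofPred_eq, Set.mem_sdiff, Set.mem_singleton_iff,
    Prod.mk.injEq]
  constructor
  · rintro ⟨⟨rfl, rfl⟩ | hab, hba⟩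
    · exact absurd hvu (asymm hba)
    · exact ⟨⟨hab.1, hba⟩, hab.2⟩
  · rintro ⟨⟨hab, hba⟩, hne⟩
    exact ⟨.inr ⟨hab, hne⟩, hba⟩

theorem eq_of_inversions_eq_empty [IsStrictTotalOrder S r] [IsStrictTotalOrder S r']
    (h : inversions r r' = ∅) : r = r' := by
  have hinv : ∀ a b, r a b → ¬r' b a := fun a b hab hba =>
    (Set.eq_empty_iff_forall_notMem.mp h) (a, b) ⟨hab, hba⟩
  ext a b
  constructor
  · intro hab
    rcases trichotomous (r := r') a b with h | rfl | h
    exacts [h, absurd hab (irrefl a), absurd h (hinv a b hab)]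
  · intro hab
    rcases trichotomous (r := r) a b with h | rfl | h
    exacts [h, absurd hab (irrefl a), absurd hab (hinv b a h)]

theorem exists_isAdjacent_of_inversions_nonempty [Finite S] [IsStrictTotalOrder S r]
    [IsStrictTotalOrder S r'] (h : (inversions r r').Nonempty) :
    ∃ u v, IsAdjacent r u v ∧ r' v u := by
  let between : S × S → Set S := fun p => {w | r p.1 w ∧ r w p.2}
  obtain ⟨⟨a, b⟩, ⟨hab, hba⟩, hmin⟩ :=
    (inversions r r').exists_min_image (fun p => (between p).ncard) (Set.toFinite _) h
  refine ⟨a, b, ⟨hab, ?_⟩, hba⟩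
  rintro ⟨w, haw, hwb⟩
  have hw : w ∈ between (a, b) := ⟨haw, hwb⟩
  have hlt : ∀ p, between p ⊆ between (a, b) \ {w} →
      (between p).ncard < (between (a, b)).ncard := fun p hsub =>
    (Set.ncard_le_ncard hsub).trans_lt (Set.ncard_sdiff_singleton_lt_of_mem hw)
  rcases trichotomous (r := r') b w with hbw | rfl | hwb'
  · refine (hmin (w, b) ⟨hwb, hbw⟩).not_gt (hlt (w, b) ?_)
    rintro x ⟨hwx, hxb⟩
    exact ⟨⟨_root_.trans haw hwx, hxb⟩, fun hx => irrefl w (hx ▸ hwx)⟩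
  · exact irrefl b hwb
  · have hwa : r' w a := _root_.trans hwb' hba
    refine (hmin (a, w) ⟨haw, hwa⟩).not_gt (hlt (a, w) ?_)
    rintro x ⟨hax, hxw⟩
    exact ⟨⟨hax, _root_.trans hxw hwb⟩, fun hx => irrefl w (hx ▸ hxw)⟩

variable (prec : S → S → Prop)

def CoherentOrder : Type _ :=
  {r : S → S → Prop // IsStrictTotalOrder S r ∧ ∀ a b, prec a b → r a b}

def IsAdjacentSwap (r s : S → S → Prop) : Prop :=
  ∃ u v, IsAdjacent r u v ∧ s = swapPair r u v

theorem CoherentOrder.reflTransGen_isAdjacentSwap [Finite S] (r r' : CoherentOrder prec) :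
    ReflTransGen (fun s t : CoherentOrder prec => IsAdjacentSwap s.1 t.1) r r' := by
  obtain ⟨r', hr', hcoh'⟩ := r'
  induction hn : (inversions r.1 r').ncard using Nat.strong_induction_on generalizing r with
  | _ n ih =>
  obtain ⟨r, hr, hcoh⟩ := r
  rcases (inversions r r').eq_empty_or_nonempty with hempty | hne
  · obtain rfl := eq_of_inversions_eq_empty hempty
    rfl
  obtain ⟨u, v, hadj, hvu⟩ := exists_isAdjacent_of_inversions_nonempty hne
  have hcoh_swap : ∀ a b, prec a b → swapPair r u v a b := fun a b hab =>
    .inr ⟨hcoh a b hab, fun ⟨hau, hbv⟩ => asymm hvu (hau ▸ hbv ▸ hcoh' a b hab)⟩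
  have hfewer : (inversions (swapPair r u v) r').ncard < n := by
    rw [inversions_swapPair hvu, ← hn]
    exact Set.ncard_sdiff_singleton_lt_of_mem ⟨hadj.1, hvu⟩
  exact .head ⟨u, v, hadj, rfl⟩
    (ih _ hfewer ⟨_, isStrictTotalOrder_swapPair hadj, hcoh_swap⟩ rfl)

end

theorem stmt_2_general {S : Type*} [Fintype S]
    (prec lt lt' : S → S → Prop)
    (hlt : IsStrictTotalOrder S lt)
    (hlt' : IsStrictTotalOrder S lt')
    (hcoh : ∀ a b, prec a b → lt a b)
    (hcoh' : ∀ a b, prec a b → lt' a b) :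
    ∃ (k : ℕ) (L : ℕ → S → S → Prop),
      (∀ a b, L 0 a b ↔ lt a b) ∧
      (∀ a b, L k a b ↔ lt' a b) ∧
      (∀ i ≤ k, IsStrictTotalOrder S (L i)) ∧
      (∀ i ≤ k, ∀ a b, prec a b → L i a b) ∧
      (∀ i < k, ∃ u v,
        L i u v ∧ (¬ ∃ w, L i u w ∧ L i w v) ∧
        (∀ a b, L (i+1) a b ↔ ((a = v ∧ b = u) ∨ (L i a b ∧ ¬(a = u ∧ b = v))))) := by
  obtain ⟨k, f, hf0, hfk, hstep⟩ :=
    (CoherentOrder.reflTransGen_isAdjacentSwap prec ⟨lt, hlt, hcoh⟩ ⟨lt', hlt', hcoh'⟩).exists_seq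
  refine ⟨k, fun i => (f i).1, by simp [hf0], by simp [hfk], fun i _ => (f i).2.1,
    fun i _ => (f i).2.2, fun i hi => ?_⟩
  obtain ⟨u, v, hadj, hswap⟩ := hstep i hi
  exact ⟨u, v, hadj.1, hadj.2, fun a b => iff_of_eq (congr_fun₂ hswap a b)⟩

/-- Any coherent linear order on a finite poset can be transformed into any other
coherent linear order by adjacent transpositions, with all intermediate orders
coherent. The chain is `L 0 = lt`, `L k = lt'`, each `L i` a linear order
coherent with `prec`, and `L (i+1)` obtained from `L i` by transposing one
pair adjacent in `L i`. -/
theorem stmt_2 {S : Type*} [Fintype S]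
    (prec lt lt' : S → S → Prop)
    (hprec : IsStrictOrder S prec)
    (hlt : IsStrictTotalOrder S lt)
    (hlt' : IsStrictTotalOrder S lt')
    (hcoh : ∀ a b, prec a b → lt a b)
    (hcoh' : ∀ a b, prec a b → lt' a b) :
    ∃ (k : ℕ) (L : ℕ → S → S → Prop),
      (∀ a b, L 0 a b ↔ lt a b) ∧
      (∀ a b, L k a b ↔ lt' a b) ∧
      (∀ i ≤ k, IsStrictTotalOrder S (L i)) ∧
      (∀ i ≤ k, ∀ a b, prec a b → L i a b) ∧
      (∀ i < k, ∃ u v,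
        L i u v ∧ (¬ ∃ w, L i u w ∧ L i w v) ∧
        (∀ a b, L (i+1) a b ↔ ((a = v ∧ b = u) ∨ (L i a b ∧ ¬(a = u ∧ b = v))))) :=
  stmt_2_general prec lt lt' hlt hlt' hcoh hcoh'
end

section
/- In a syntactic circuit with n input nodes, every stage S has exactly n exits; in particular, the circuit has exactly n output nodes. -/
/-!
The producers that are inputs or exits of gates of `S` number `n + |exits of S|`. Those among
them bound to entries of gates of `S` are exactly the producers bound to such entries, since a
gate feeding a gate of `S` lies in `S`; they number `|entries of S| = |exits of S|`. Removing
them leaves the exits of the stage, so there are `n`. For `S` the set of all gates, the exits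
are the producers bound to output nodes, and `Bind` makes these equinumerous with the outputs.
-/

open Set

theorem Equiv.ncard_preimage {α β : Type*} (e : α ≃ β) (t : Set β) : (e ⁻¹' t).ncard = t.ncard :=
  ncard_preimage_of_injective_subset_range e.injective (by simp)

theorem ncard_preimage_eq_of_card_fiber_eq {α β γ : Type*} [Finite α] [Finite β]
    {f : α → γ} {g : β → γ} (h : ∀ c, Nat.card {a // f a = c} = Nat.card {b // g b = c})
    (s : Set γ) : (f ⁻¹' s).ncard = (g ⁻¹' s).ncard := by
  let e : α ≃ β := Equiv.ofFiberEquiv fun c => (Finite.card_eq.1 (h c)).some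
  have hfg : f ⁻¹' s = e ⁻¹' (g ⁻¹' s) := by
    ext a; simp only [mem_preimage, e, Equiv.ofFiberEquiv_map]
  rw [hfg, Equiv.ncard_preimage]

theorem ncard_setOf_forall_inr_mem {α β : Type*} [Finite α] [Finite β] (t : Set β) :
    {p : α ⊕ β | ∀ b, p = Sum.inr b → b ∈ t}.ncard = Nat.card α + t.ncard := by
  have hp : {p : α ⊕ β | ∀ b, p = Sum.inr b → b ∈ t} = range Sum.inl ∪ Sum.inr '' t := by
    ext (a | b) <;> simp
  rw [hp, ncard_union_eq (by simp [disjoint_left]), ← image_univ,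
    ncard_image_of_injective _ Sum.inl_injective, ncard_image_of_injective _ Sum.inr_injective,
    ncard_univ]

section Circuit

variable {In Out Gate Entry Exit : Type*} (Bind : (In ⊕ Exit) ≃ (Entry ⊕ Out))
  (entryGate : Entry → Gate) (exitGate : Exit → Gate)

def stageExits (S : Set Gate) : Set (In ⊕ Exit) :=
  {p | (∀ x : Exit, p = Sum.inr x → exitGate x ∈ S) ∧
    (∀ e : Entry, Bind p = Sum.inl e → entryGate e ∉ S)}

theorem stageExits_eq_sdiff (S : Set Gate) :
    stageExits Bind entryGate exitGate S =
      {p | ∀ x, p = Sum.inr x → x ∈ exitGate ⁻¹' S} \ Bind ⁻¹' (Sum.inl '' (entryGate ⁻¹' S)) := by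
  ext p
  simp only [stageExits, mem_ofPred_eq, mem_sdiff, mem_preimage, mem_image, not_exists, not_and]
  exact and_congr_right fun _ => forall_congr' fun e => by rw [eq_comm]; tauto

theorem ncard_stageExits [Finite In] [Finite Entry] [Finite Exit]
    (harity : ∀ G, Nat.card {e // entryGate e = G} = Nat.card {x // exitGate x = G})
    {S : Set Gate}
    (hS : ∀ x e, Bind (.inr x) = .inl e → entryGate e ∈ S → exitGate x ∈ S) :
    (stageExits Bind entryGate exitGate S).ncard = Nat.card In := by
  have hsub : Bind ⁻¹' (Sum.inl '' (entryGate ⁻¹' S)) ⊆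
      {p | ∀ x, p = Sum.inr x → x ∈ exitGate ⁻¹' S} := by
    rintro p ⟨e, he, hpe⟩ x rfl
    exact hS x e hpe.symm he
  rw [stageExits_eq_sdiff, ncard_sdiff hsub, ncard_setOf_forall_inr_mem, Equiv.ncard_preimage,
    ncard_image_of_injective _ Sum.inl_injective, ncard_preimage_eq_of_card_fiber_eq harity,
    Nat.add_sub_cancel]

theorem stageExits_univ : stageExits Bind entryGate exitGate univ = Bind ⁻¹' range Sum.inr := by
  ext p
  cases h : Bind p <;> simp [stageExits, h]

end Circuit

theorem stmt_16_general {In Out Gate Entry Exit : Type*}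
    [Fintype In] [Fintype Out] [Fintype Entry] [Fintype Exit]
    (entryGate : Entry → Gate) (exitGate : Exit → Gate)
    (harity : ∀ G : Gate,
      Nat.card {e : Entry // entryGate e = G} = Nat.card {x : Exit // exitGate x = G})
    (Bind : (In ⊕ Exit) ≃ (Entry ⊕ Out))
    (csrc : Gate → Gate → Prop)
    (src : Gate → Gate → Prop)
    (hsrc : ∀ G₁ G₂, src G₁ G₂ ↔
      ((∃ (x : Exit) (e : Entry),
          exitGate x = G₁ ∧ Bind (Sum.inr x) = Sum.inl e ∧ entryGate e = G₂) ∨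
        csrc G₁ G₂)) :
    (∀ S : Set Gate,
        (∀ F G, Relation.TransGen src F G → G ∈ S → F ∈ S) →
        Set.ncard {p : In ⊕ Exit |
            (∀ x : Exit, p = Sum.inr x → exitGate x ∈ S) ∧
            (∀ e : Entry, Bind p = Sum.inl e → entryGate e ∉ S)} =
          Fintype.card In) ∧
      Fintype.card Out = Fintype.card In := by
  have hstage : ∀ S : Set Gate, (∀ F G, Relation.TransGen src F G → G ∈ S → F ∈ S) →
      (stageExits Bind entryGate exitGate S).ncard = Fintype.card In := fun S hS => by
    rw [← Nat.card_eq_fintype_card]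
    exact ncard_stageExits Bind entryGate exitGate harity fun x e hxe he =>
      hS _ _ (.single ((hsrc _ _).2 (.inl ⟨x, e, rfl, hxe, rfl⟩))) he
  refine ⟨hstage, ?_⟩
  have hall := hstage univ fun _ _ _ _ => mem_univ _
  rwa [stageExits_univ, Equiv.ncard_preimage, ← image_univ,
    ncard_image_of_injective _ Sum.inr_injective, ncard_univ, Nat.card_eq_fintype_card] at hall

/-- A syntactic circuit: finite sets of input nodes `In`, output nodes `Out`,
gates `Gate`; each gate has nonempty, equinumerous sets of entries and exits
(given by the fibers of `entryGate : Entry → Gate` and `exitGate : Exit → Gate`);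
producers (`In ⊕ Exit`) are bound bijectively to consumers (`Entry ⊕ Out`);
the source relation (quantum sources via `Bind`, plus classical sources `csrc`)
is acyclic. Then every stage `S` (a set of gates closed under the transitive
closure of the source relation) has exactly `|In|` exits; in particular,
`|Out| = |In|`. -/
theorem stmt_16 {In Out Gate Entry Exit : Type*}
    [Fintype In] [Fintype Out] [Fintype Gate] [Fintype Entry] [Fintype Exit]
    (entryGate : Entry → Gate) (exitGate : Exit → Gate)
    (hne : ∀ G : Gate, ∃ e : Entry, entryGate e = G)
    (harity : ∀ G : Gate,
      Nat.card {e : Entry // entryGate e = G} = Nat.card {x : Exit // exitGate x = G})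
    (Bind : (In ⊕ Exit) ≃ (Entry ⊕ Out))
    (csrc : Gate → Gate → Prop)
    (src : Gate → Gate → Prop)
    (hsrc : ∀ G₁ G₂, src G₁ G₂ ↔
      ((∃ (x : Exit) (e : Entry),
          exitGate x = G₁ ∧ Bind (Sum.inr x) = Sum.inl e ∧ entryGate e = G₂) ∨
        csrc G₁ G₂))
    (hacyc : ∀ G, ¬ Relation.TransGen src G G) :
    (∀ S : Set Gate,
        (∀ F G, Relation.TransGen src F G → G ∈ S → F ∈ S) →
        Set.ncard {p : In ⊕ Exit |
            (∀ x : Exit, p = Sum.inr x → exitGate x ∈ S) ∧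
            (∀ e : Entry, Bind p = Sum.inl e → entryGate e ∉ S)} =
          Fintype.card In) ∧
      Fintype.card Out = Fintype.card In :=
  stmt_16_general entryGate exitGate harity Bind csrc src hsrc
end
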